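/- arXiv:math/0606122 — 2 statements merged into one kernel-verified Lean document; each statement's English description precedes it below -/
import Mathlib

section
/- Let B be a position on the 37-hole board in 8-move solitaire, let c(B) be the number of occupied corners and p(B) the number of corner pegs (occupied holes among the 8 corners and c3,e3,c5,e5). Then h₁(B) = c(B) + ⌈(p(B) − 1)/4⌉ is an admissible heuristic: any sequence of moves from B ending with a single peg anywhere on the board has length at least h₁(B) (with h₁ overridden to 0 if B already has exactly one peg). -/
open Finset

abbrev Cell := ℤ × ℤ
abbrev Pos := Finset Cell

/-- The four orthogonal jump directions (4-move solitaire). -/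
def dirs4 : Finset Cell := {(1,0),(-1,0),(0,1),(0,-1)}

/-- The eight jump directions (8-move solitaire). -/
def dirs8 : Finset Cell :=
  {(1,0),(-1,0),(0,1),(0,-1),(1,1),(1,-1),(-1,1),(-1,-1)}

/-- A legal jump on `board` with allowed directions `dirs`, taking position `B` to `B'`:
the peg at `p` jumps over the peg at `p + d` into the empty hole `p + d + d`,
removing the jumped peg. -/
def IsJump (board dirs : Finset Cell) (B B' : Pos) (p d : Cell) : Prop :=
  d ∈ dirs ∧ p ∈ B ∧ p + d ∈ B ∧ p + d + d ∈ board ∧ p + d + d ∉ B ∧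
    B' = insert (p + d + d) ((B.erase p).erase (p + d))

/-- A move: one or more consecutive jumps by the same peg, starting at `p` and ending at `q`. -/
inductive Move (board dirs : Finset Cell) : Pos → Pos → Cell → Cell → Prop
  | single {B B' : Pos} {p d : Cell} (h : IsJump board dirs B B' p d) :
      Move board dirs B B' p (p + d + d)
  | cons {B B' B'' : Pos} {p d q : Cell} (h : IsJump board dirs B B' p d)
      (hm : Move board dirs B' B'' (p + d + d) q) : Move board dirs B B'' p q

/-- A sequence of moves, recorded as a list of (start hole, end hole) pairs. -/
inductive MoveSeq (board dirs : Finset Cell) : Pos → Pos → List (Cell × Cell) → Prop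
  | nil (B : Pos) : MoveSeq board dirs B B []
  | cons {B B' B'' : Pos} {p q : Cell} {l : List (Cell × Cell)}
      (h : Move board dirs B B' p q) (hs : MoveSeq board dirs B' B'' l) :
      MoveSeq board dirs B B'' ((p, q) :: l)

/-- The diamond board of "radius" r : all integer points with |x|+|y| ≤ r. -/
noncomputable def diamondB (r : ℤ) : Finset Cell :=
  ((Finset.Icc (-r) r) ×ˢ (Finset.Icc (-r) r)).filter (fun p => |p.1| + |p.2| ≤ r)

/-- The standard 33-hole cross-shaped board. -/
noncomputable def board33 : Finset Cell :=
  ((Finset.Icc (-3 : ℤ) 3) ×ˢ (Finset.Icc (-3 : ℤ) 3)).filter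
    (fun p => |p.1| ≤ 1 ∨ |p.2| ≤ 1)

/-- The 37-hole board (7×7 square minus three holes at each corner). -/
noncomputable def board37 : Finset Cell :=
  ((Finset.Icc (-3 : ℤ) 3) ×ˢ (Finset.Icc (-3 : ℤ) 3)).filter
    (fun p => |p.1| ≤ 1 ∨ |p.2| ≤ 1 ∨ (|p.1| ≤ 2 ∧ |p.2| ≤ 2))

/-- The central 3×3 block of nine holes. -/
noncomputable def C9 : Finset Cell := (Finset.Icc (-1 : ℤ) 1) ×ˢ (Finset.Icc (-1 : ℤ) 1)

/-- The eight corners of the 37-hole board. -/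
def corners37 : Finset Cell :=
  {(-1,-3),(1,-3),(-3,-1),(3,-1),(-3,1),(3,1),(-1,3),(1,3)}

/-- The corner-peg holes of the 37-hole board: the eight corners plus c3,e3,c5,e5. -/
def cornerPegHoles37 : Finset Cell :=
  corners37 ∪ {(-1,-1),(1,-1),(-1,1),(1,1)}

/-- Number of occupied corners. -/
def cB (B : Pos) : ℕ := (B ∩ corners37).card

/-- Number of corner pegs. -/
def pB (B : Pos) : ℕ := (B ∩ cornerPegHoles37).card

/-- The heuristic h₁(B) = c(B) + ⌈(p(B) − 1)/4⌉, overridden to 0 for one-peg positions. -/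
def h₁ (B : Pos) : ℕ := if B.card = 1 then 0 else cB B + (pB B - 1 + 3) / 4

/-
The corner-peg holes are exactly the holes with both coordinates odd. A jump moves a peg by an
even vector and no direction of 8-move solitaire is even in both coordinates, so a move starting
on an odd hole keeps the number of corner pegs, while a move starting elsewhere only loses corner
pegs it jumps over; the only corner-peg holes that can be jumped over are the four central ones.
Since at most one corner peg survives, at least ⌈(p(B) − 1)/4⌉ moves start off the odd holes.
A corner can never be jumped over, so every occupied corner is the start of a move (a peg sitting
on it until the end could not be the only one left, as the last move lands elsewhere); these
c(B) moves start on odd holes, hence are distinct from the previous ones.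
-/

def OddCell (c : Cell) : Prop := Odd c.1 ∧ Odd c.2

instance : DecidablePred OddCell := fun c => inferInstanceAs (Decidable (Odd c.1 ∧ Odd c.2))

def Jumpable (board dirs : Finset Cell) (c : Cell) : Prop :=
  ∃ d ∈ dirs, c - d ∈ board ∧ c + d ∈ board

instance (board dirs : Finset Cell) : DecidablePred (Jumpable board dirs) :=
  fun c => inferInstanceAs (Decidable (∃ d ∈ dirs, c - d ∈ board ∧ c + d ∈ board))

lemma oddCell_add_add_iff (p d : Cell) : OddCell (p + d + d) ↔ OddCell p := by
  simp only [OddCell, Prod.fst_add, Prod.snd_add, add_assoc, Int.odd_add, Even.add_self,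
    iff_true]

lemma not_oddCell_add {p d : Cell} (hp : OddCell p) (hd : Odd d.1 ∨ Odd d.2) :
    ¬OddCell (p + d) := by
  simp only [OddCell, Prod.fst_add, Prod.snd_add, Int.odd_add, ← Int.not_odd_iff_even] at hp ⊢
  tauto

section Jump

variable {board dirs : Finset Cell} {B B' : Pos} {p d : Cell}

lemma IsJump.subset_board (h : IsJump board dirs B B' p d) (hB : B ⊆ board) : B' ⊆ board := by
  obtain ⟨-, -, -, hr, -, rfl⟩ := h
  exact insert_subset hr ((erase_subset _ _).trans ((erase_subset _ _).trans hB))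

lemma IsJump.mem_of_mem (h : IsJump board dirs B B' p d) (hB : B ⊆ board) {x : Cell}
    (hx : x ∈ B) (hxp : x ≠ p) (hxj : ¬Jumpable board dirs x) : x ∈ B' := by
  obtain ⟨hd, hp, -, hr, -, rfl⟩ := h
  have hxm : x ≠ p + d := by
    rintro rfl
    exact hxj ⟨d, hd, by rw [add_sub_cancel_right]; exact hB hp, hr⟩
  exact mem_insert_of_mem (mem_erase.2 ⟨hxm, mem_erase.2 ⟨hxp, hx⟩⟩)

lemma IsJump.card_filter_oddCell_eq (h : IsJump board dirs B B' p d)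
    (hdirs : ∀ d ∈ dirs, Odd d.1 ∨ Odd d.2) (hp : OddCell p) :
    (B'.filter OddCell).card = (B.filter OddCell).card := by
  obtain ⟨hd, hpB, -, -, hrB, rfl⟩ := h
  have hm : ¬OddCell (p + d) := not_oddCell_add hp (hdirs d hd)
  have hr : OddCell (p + d + d) := (oddCell_add_add_iff p d).2 hp
  rw [filter_insert, if_pos hr, filter_erase, filter_erase,
    erase_eq_of_notMem (fun hmem => hm (mem_filter.1 (mem_of_mem_erase hmem)).2),
    card_insert_of_notMem (fun hmem => hrB (mem_filter.1 (mem_of_mem_erase hmem)).1),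
    card_erase_add_one (mem_filter.2 ⟨hpB, hp⟩)]

end Jump

section Move

variable {board dirs : Finset Cell} {B B'' : Pos} {p q : Cell}

lemma Move.subset_board (h : Move board dirs B B'' p q) (hB : B ⊆ board) : B'' ⊆ board := by
  induction h with
  | single h => exact h.subset_board hB
  | cons h _ ih => exact ih (h.subset_board hB)

lemma Move.end_mem (h : Move board dirs B B'' p q) : q ∈ B'' := by
  induction h with
  | single h => exact h.2.2.2.2.2 ▸ mem_insert_self _ _
  | cons _ _ ih => exact ih

lemma Move.mem_of_mem (h : Move board dirs B B'' p q) (hB : B ⊆ board) {x : Cell}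
    (hx : x ∈ B) (hxp : x ≠ p) (hxj : ¬Jumpable board dirs x) : x ∈ B'' := by
  induction h with
  | single h => exact h.mem_of_mem hB hx hxp hxj
  | cons h _ ih =>
    exact ih (h.subset_board hB) (h.mem_of_mem hB hx hxp hxj) fun hxr => h.2.2.2.2.1 (hxr ▸ hx)

lemma Move.end_ne (h : Move board dirs B B'' p q) (hB : B ⊆ board) {x : Cell}
    (hx : x ∈ B) (hxp : x ≠ p) (hxj : ¬Jumpable board dirs x) : q ≠ x := by
  induction h with
  | single h => exact fun hxr => h.2.2.2.2.1 (hxr ▸ hx)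
  | cons h _ ih =>
    exact ih (h.subset_board hB) (h.mem_of_mem hB hx hxp hxj) fun hxr => h.2.2.2.2.1 (hxr ▸ hx)

lemma Move.card_filter_oddCell_eq (h : Move board dirs B B'' p q)
    (hdirs : ∀ d ∈ dirs, Odd d.1 ∨ Odd d.2) (hp : OddCell p) :
    (B''.filter OddCell).card = (B.filter OddCell).card := by
  induction h with
  | single h => exact h.card_filter_oddCell_eq hdirs hp
  | cons h _ ih =>
    rw [ih ((oddCell_add_add_iff _ _).2 hp), h.card_filter_oddCell_eq hdirs hp]

lemma Move.card_filter_oddCell_le (h : Move board dirs B B'' p q) (hB : B ⊆ board)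
    (hp : ¬OddCell p) :
    (B.filter OddCell).card ≤ (B''.filter OddCell).card +
      (board.filter fun c => OddCell c ∧ Jumpable board dirs c).card := by
  refine (card_le_card fun x hx => ?_).trans (card_union_le _ _)
  obtain ⟨hxB, hxo⟩ := mem_filter.1 hx
  by_cases hxj : Jumpable board dirs x
  · exact mem_union_right _ (mem_filter.2 ⟨hB hxB, hxo, hxj⟩)
  · exact mem_union_left _ (mem_filter.2
      ⟨h.mem_of_mem hB hxB (fun hxp => hp (hxp ▸ hxo)) hxj, hxo⟩)

end Move

namespace MoveSeq

variable {board dirs : Finset Cell} {B B₂ : Pos} {l : List (Cell × Cell)}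

lemma card_filter_oddCell_le (h : MoveSeq board dirs B B₂ l) (hB : B ⊆ board)
    (hdirs : ∀ d ∈ dirs, Odd d.1 ∨ Odd d.2) :
    (B.filter OddCell).card ≤ (B₂.filter OddCell).card +
      (board.filter fun c => OddCell c ∧ Jumpable board dirs c).card *
        l.countP fun m => ¬OddCell m.1 := by
  induction h with
  | nil => simp
  | @cons B B' B'' p q l hm _ ih =>
    have ih := ih (hm.subset_board hB)
    by_cases hp : OddCell p
    · have := hm.card_filter_oddCell_eq hdirs hp
      simp only [List.countP_cons, hp, not_true_eq_false, decide_false, Bool.false_eq_true,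
        if_false, add_zero]
      omega
    · have := hm.card_filter_oddCell_le hB hp
      simp only [List.countP_cons, hp, not_false_eq_true, decide_true, if_true, mul_add, mul_one]
      omega

lemma exists_move_from (h : MoveSeq board dirs B B₂ l) (hB : B ⊆ board) (h₂ : B₂.card = 1)
    {c : Cell} (hc : c ∈ B) (hcj : ¬Jumpable board dirs c) (hBc : B ≠ {c}) :
    ∃ q, (c, q) ∈ l := by
  induction h with
  | nil B =>
    obtain ⟨a, rfl⟩ := card_eq_one.1 h₂
    exact absurd (mem_singleton.1 hc ▸ rfl) hBc
  | @cons B B' B'' p q l hm _ ih =>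
    by_cases hpc : p = c
    · exact ⟨q, hpc ▸ List.mem_cons_self⟩
    have hcB' := hm.mem_of_mem hB hc (Ne.symm hpc) hcj
    have hqc := hm.end_ne hB hc (Ne.symm hpc) hcj
    obtain ⟨q', hq'⟩ := ih (hm.subset_board hB) h₂ hcB' fun hB' =>
      hqc (mem_singleton.1 (hB' ▸ hm.end_mem))
    exact ⟨q', List.mem_cons_of_mem _ hq'⟩

end MoveSeq

lemma card_le_countP_fst {α β : Type*} [DecidableEq α] (s : Finset α) (l : List (α × β))
    (h : ∀ a ∈ s, ∃ b, (a, b) ∈ l) : s.card ≤ l.countP fun m => m.1 ∈ s := by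
  have hsub : s ⊆ ((l.filter fun m => m.1 ∈ s).map Prod.fst).toFinset := fun a ha => by
    obtain ⟨b, hab⟩ := h a ha
    exact List.mem_toFinset.2
      (List.mem_map.2 ⟨(a, b), List.mem_filter.2 ⟨hab, decide_eq_true ha⟩, rfl⟩)
  calc s.card ≤ _ := card_le_card hsub
    _ ≤ _ := List.toFinset_card_le _
    _ = _ := by rw [List.length_map, List.countP_eq_length_filter]

lemma dirs8_odd : ∀ d ∈ dirs8, Odd d.1 ∨ Odd d.2 := by decide

lemma cornerPegHoles37_eq : cornerPegHoles37 = board37.filter OddCell := by decide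

lemma corners37_oddCell : ∀ c ∈ corners37, OddCell c := by decide

lemma corners37_not_jumpable : ∀ c ∈ corners37, ¬Jumpable board37 dirs8 c := by decide

lemma card_jumpable_oddCell37 :
    (board37.filter fun c => OddCell c ∧ Jumpable board37 dirs8 c).card = 4 := by decide

theorem stmt_14_general (B : Pos) (hB : B ⊆ board37) (t : Cell)
    (l : List (Cell × Cell)) (h : MoveSeq board37 dirs8 B {t} l) :
    h₁ B ≤ l.length := by
  unfold h₁
  split_ifs with h1
  · exact Nat.zero_le _
  have hcorners : cB B ≤ l.countP fun m => m.1 ∈ B ∩ corners37 :=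
    card_le_countP_fst _ _ fun c hc =>
      h.exists_move_from hB (card_singleton t) (mem_inter.1 hc).1
        (corners37_not_jumpable c (mem_inter.1 hc).2) fun hBc => h1 (hBc ▸ card_singleton c)
  have hpegs : pB B ≤ 1 + 4 * l.countP fun m => ¬OddCell m.1 := by
    have hcount := h.card_filter_oddCell_le hB dirs8_odd
    rw [card_jumpable_oddCell37] at hcount
    have hB' : B ∩ cornerPegHoles37 = B.filter OddCell := by
      rw [cornerPegHoles37_eq, inter_filter, inter_eq_left.2 hB]
    have hlast : (({t} : Pos).filter OddCell).card ≤ 1 := card_filter_le _ _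
    unfold pB
    rw [hB']
    omega
  have hdisjoint : (l.countP fun m => m.1 ∈ B ∩ corners37) +
      (l.countP fun m => ¬OddCell m.1) ≤ l.length := by
    rw [List.length_eq_countP_add_countP fun m => decide (m.1 ∈ B ∩ corners37)]
    refine Nat.add_le_add_left (List.countP_mono_left fun m _ hm => ?_) _
    simp only [decide_eq_true_eq, decide_not, Bool.not_eq_eq_eq_not, Bool.not_true,
      decide_eq_false_iff_not] at hm ⊢
    exact fun hc => hm (corners37_oddCell _ (mem_inter.1 hc).2)
  omega

/-- h₁ is admissible on the 37-hole board under 8-move solitaire: any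
sequence of moves from `B` ending with a single peg anywhere on the board has length at
least `h₁ B`. -/
theorem stmt_14 (B : Pos) (hB : B ⊆ board37) (t : Cell) (ht : t ∈ board37)
    (l : List (Cell × Cell)) (h : MoveSeq board37 dirs8 B {t} l) :
    h₁ B ≤ l.length :=
  stmt_14_general B hB t l h
end

section
/- In any peg solitaire game (4-, 6-, or 8-move), immediately before the final move of a solution that ends with exactly one peg, the peg that makes the final move must be the only peg in its category; equivalently, if a position B has at least two pegs in every category, at least 2 more moves are required to reach a single-peg position. -/
open Finset

/-- The category of a hole: its coordinates modulo 2. -/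
def cat (p : Cell) : ZMod 2 × ZMod 2 := ((p.1 : ZMod 2), (p.2 : ZMod 2))

/-! A jump preserves the category of the jumping peg and removes a peg of another category,
since every direction of `dirs8` is nonzero modulo 2. Hence a move never changes the number
of pegs in the category of the moving peg; if the move ends with the single peg `q`, that
number was already 1. -/

lemma cat_add_add_self (p d : Cell) : cat (p + d + d) = cat p := by
  simp only [cat, Prod.fst_add, Prod.snd_add]
  push_cast
  simp only [add_assoc, CharTwo.add_self_eq_zero, add_zero]

lemma cat_add_ne_of_mem_dirs8 {d : Cell} (hd : d ∈ dirs8) (p : Cell) : cat (p + d) ≠ cat p := by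
  fin_cases hd <;> simp [cat, Prod.ext_iff]

section

variable {board dirs : Finset Cell} {B B' : Pos} {p q : Cell}

lemma IsJump.card_filter_cat_eq (hdirs : dirs ⊆ dirs8) {d : Cell}
    (h : IsJump board dirs B B' p d) :
    (B'.filter (cat · = cat p)).card = (B.filter (cat · = cat p)).card := by
  obtain ⟨hd, hp, -, -, hlanding, rfl⟩ := h
  have hp' : p ∈ B.filter (cat · = cat p) := mem_filter.2 ⟨hp, rfl⟩
  have hover : p + d ∉ (B.filter (cat · = cat p)).erase p := fun h =>
    cat_add_ne_of_mem_dirs8 (hdirs hd) p (mem_filter.1 (mem_of_mem_erase h)).2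
  have hlanding' : p + d + d ∉ (B.filter (cat · = cat p)).erase p := fun h =>
    hlanding (mem_filter.1 (mem_of_mem_erase h)).1
  rw [filter_insert, if_pos (cat_add_add_self p d), filter_erase, filter_erase,
    erase_eq_of_notMem hover, card_insert_of_notMem hlanding', card_erase_add_one hp']

namespace Move

lemma mem_left (h : Move board dirs B B' p q) : p ∈ B := by
  cases h with
  | single hj => exact hj.2.1
  | cons hj _ => exact hj.2.1

lemma mem_right (h : Move board dirs B B' p q) : q ∈ B' := by
  induction h with
  | single hj => rw [hj.2.2.2.2.2]; exact mem_insert_self _ _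
  | cons _ _ ih => exact ih

lemma cat_eq (h : Move board dirs B B' p q) : cat q = cat p := by
  induction h with
  | single => exact cat_add_add_self _ _
  | cons _ _ ih => exact ih.trans (cat_add_add_self _ _)

lemma card_filter_cat_eq (hdirs : dirs ⊆ dirs8) (h : Move board dirs B B' p q) :
    (B'.filter (cat · = cat p)).card = (B.filter (cat · = cat p)).card := by
  induction h with
  | single hj => exact hj.card_filter_cat_eq hdirs
  | @cons _ _ _ p d _ hj _ ih =>
    rw [← cat_add_add_self p d, ih, cat_add_add_self, hj.card_filter_cat_eq hdirs]

lemma filter_cat_eq_singleton (hdirs : dirs ⊆ dirs8) (h : Move board dirs B B' p q)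
    (hB' : B' = {q}) : B.filter (cat · = cat p) = {p} := by
  have hcard : (B.filter (cat · = cat p)).card = 1 := by
    rw [← h.card_filter_cat_eq hdirs, hB', filter_singleton, if_pos h.cat_eq, card_singleton]
  refine (eq_of_subset_of_card_le ?_ ?_).symm
  · exact singleton_subset_iff.2 (mem_filter.2 ⟨h.mem_left, rfl⟩)
  · rw [hcard, card_singleton]

end Move

lemma MoveSeq.two_le_length (hdirs : dirs ⊆ dirs8)
    (hB : ∀ k : ZMod 2 × ZMod 2, 2 ≤ (B.filter (cat · = k)).card) {t : Cell}
    {l : List (Cell × Cell)} (hs : MoveSeq board dirs B {t} l) : 2 ≤ l.length := by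
  cases hs with
  | nil => simpa [filter_singleton] using hB (cat t)
  | @cons _ _ _ p _ _ hm hs =>
    cases hs with
    | nil =>
      obtain rfl := eq_of_mem_singleton hm.mem_right
      simpa [hm.filter_cat_eq_singleton hdirs rfl] using hB (cat p)
    | cons => simp

end

/-- in any peg solitaire game (jump directions among the eight unit
directions, covering 4-, 6- and 8-move solitaire), immediately before the final move of a
solution ending with exactly one peg, the moving peg must be the only peg in its category;
equivalently, if a position has at least two pegs in every category, at least 2 more moves
are required to reach a single-peg position. -/
theorem stmt_15 (board dirs : Finset Cell) (hdirs : dirs ⊆ dirs8) :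
    (∀ (B B' : Pos) (p q : Cell), Move board dirs B B' p q → B' = {q} →
        B.filter (fun v => cat v = cat p) = {p}) ∧
      (∀ B : Pos, (∀ k : ZMod 2 × ZMod 2, 2 ≤ (B.filter (fun v => cat v = k)).card) →
        ∀ (t : Cell) (l : List (Cell × Cell)), MoveSeq board dirs B {t} l →
          2 ≤ l.length) :=
  ⟨fun _ _ _ _ hm hB' => hm.filter_cat_eq_singleton hdirs hB',
    fun _ hB _ _ hs => hs.two_le_length hdirs hB⟩
end
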